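/- (Energy a posteriori error estimate for the dual problem.) Under the dual error setting with coercivity constants α_A ≥ α_{A,LB} > 0 and α_G ≥ α_{G,LB} > 0, one has the parameter-independent space-time energy bound ∑_{m=0}^{N−1} [ (εᵐ)ᵀ M εᵐ + Δt·(εᵐ)ᵀ S εᵐ ] = ∑_{m=0}^{N−1} ‖εᵐ‖²_{G*} ≤ ((T + Δt)/(α_{G,LB}·α_{A,LB}))·∑_{m=0}^{N−1} ‖ϱᵐ‖₋₁², where T = N·Δt. -/

import Mathlib

/-! Testing the dual step with `εᵐ` and bounding the `M`-coupling by Young's inequality gives the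
energy balance
`‖εᵐ‖²_M + Δt (εᵐ)ᵀ A_sym εᵐ ≤ ½ ‖εᵐ‖²_M + ½ ‖εᵐ⁺¹‖²_M + Δt ‖ϱᵐ‖₋₁ ‖εᵐ‖_{G*}`.
With `α_A`-coercivity it telescopes backwards from `εᴺ = 0`, bounding both `α_A² ∑ ‖εᵐ‖²_{G*}` and
each `α_A ‖εᵐ‖²_M` by `∑ ‖ϱᵐ‖₋₁²` (times `Δt` for the latter). Feeding these into the
`α_G`-coercivity of `M + Δt A_sym` at every step and summing gives the constant
`(T + Δt) / (α_G α_A)`. -/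

open Matrix BigOperators Finset

/-- The energy norm `‖v‖_{G*} = √(vᵀ G* v)` induced by a matrix `G`. -/
noncomputable def normG {d : ℕ} (G : Matrix (Fin d) (Fin d) ℝ) (v : Fin d → ℝ) : ℝ :=
  Real.sqrt (v ⬝ᵥ G.mulVec v)

/-- The dual norm `‖r‖₋₁ = sup_{v ≠ 0} (rᵀ v)/‖v‖_{G*}`. -/
noncomputable def dualNorm {d : ℕ} (G : Matrix (Fin d) (Fin d) ℝ) (r : Fin d → ℝ) : ℝ :=
  ⨆ v : {v : Fin d → ℝ // v ≠ 0}, (r ⬝ᵥ (v : Fin d → ℝ)) / normG G (v : Fin d → ℝ)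

/-- The symmetric part `(A + Aᵀ)/2` of a matrix. -/
noncomputable def symPart {d : ℕ} (A : Matrix (Fin d) (Fin d) ℝ) : Matrix (Fin d) (Fin d) ℝ :=
  ((1 : ℝ)/2) • (A + Aᵀ)

section EnergyNorms

variable {d : ℕ}

lemma dotProduct_add_smul_mulVec (M B : Matrix (Fin d) (Fin d) ℝ) (c : ℝ) (u v : Fin d → ℝ) :
    u ⬝ᵥ (M + c • B) *ᵥ v = u ⬝ᵥ M *ᵥ v + c * (u ⬝ᵥ B *ᵥ v) := by
  simp only [add_mulVec, smul_mulVec, dotProduct_add, dotProduct_smul, smul_eq_mul]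

lemma dotProduct_transpose_mulVec_self (A : Matrix (Fin d) (Fin d) ℝ) (v : Fin d → ℝ) :
    v ⬝ᵥ Aᵀ *ᵥ v = v ⬝ᵥ A *ᵥ v := by
  rw [dotProduct_mulVec, vecMul_transpose, dotProduct_comm]

lemma dotProduct_symPart_mulVec_self (A : Matrix (Fin d) (Fin d) ℝ) (v : Fin d → ℝ) :
    v ⬝ᵥ symPart A *ᵥ v = v ⬝ᵥ A *ᵥ v := by
  rw [symPart, smul_mulVec, add_mulVec, dotProduct_smul, dotProduct_add,
    dotProduct_transpose_mulVec_self, smul_eq_mul]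
  ring

variable {G : Matrix (Fin d) (Fin d) ℝ}

lemma normG_sq (hG : G.PosSemidef) (v : Fin d → ℝ) : normG G v ^ 2 = v ⬝ᵥ G *ᵥ v :=
  Real.sq_sqrt (by simpa using hG.dotProduct_mulVec_nonneg v)

lemma normG_pos (hG : G.PosDef) {v : Fin d → ℝ} (hv : v ≠ 0) : 0 < normG G v :=
  Real.sqrt_pos.2 (by simpa using hG.dotProduct_mulVec_pos hv)

lemma normG_neg (v : Fin d → ℝ) : normG G (-v) = normG G v := by
  simp [normG, mulVec_neg]

lemma dotProduct_mulVec_le_normG_mul_normG (hG : G.PosSemidef) (u v : Fin d → ℝ) :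
    u ⬝ᵥ G *ᵥ v ≤ normG G u * normG G v := by
  have hsymm : Gᵀ = G := G.conjTranspose_eq_transpose_of_trivial.symm.trans hG.1
  have hcs := (toBilin' G).apply_mul_apply_le_of_forall_zero_le
    (fun x => by simpa [toBilin'_apply'] using hG.dotProduct_mulVec_nonneg x) u v
  rw [toBilin'_apply', toBilin'_apply', dotProduct_mulVec v, ← mulVec_transpose, hsymm,
    dotProduct_comm (G *ᵥ v), ← sq] at hcs
  simp only [toBilin'_apply'] at hcs
  rw [normG, normG, ← Real.sqrt_mul (by simpa using hG.dotProduct_mulVec_nonneg u)]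
  exact (le_abs_self _).trans (Real.abs_le_sqrt hcs)

lemma dotProduct_le_dualNorm_mul_normG (hG : G.PosDef) (r w : Fin d → ℝ) :
    r ⬝ᵥ w ≤ dualNorm G r * normG G w := by
  obtain ⟨u, rfl⟩ := mulVec_surjective_iff_isUnit.2 hG.isUnit r
  rcases eq_or_ne w 0 with rfl | hw
  · simp [normG]
  have hbdd : BddAbove (Set.range fun v : {v : Fin d → ℝ // v ≠ 0} =>
      (G *ᵥ u ⬝ᵥ (v : Fin d → ℝ)) / normG G v) := by
    refine ⟨normG G u, Set.forall_mem_range.2 fun v => ?_⟩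
    rw [div_le_iff₀ (normG_pos hG v.2), dotProduct_comm, mul_comm]
    exact dotProduct_mulVec_le_normG_mul_normG hG.posSemidef _ _
  have hle := le_ciSup hbdd ⟨w, hw⟩
  rwa [div_le_iff₀ (normG_pos hG hw)] at hle

lemma dotProduct_mulVec_le_half_add_half {M : Matrix (Fin d) (Fin d) ℝ} (hM : M.PosSemidef)
    (u v : Fin d → ℝ) : u ⬝ᵥ M *ᵥ v ≤ (u ⬝ᵥ M *ᵥ u + v ⬝ᵥ M *ᵥ v) / 2 := by
  rw [← normG_sq hM, ← normG_sq hM]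
  nlinarith [dotProduct_mulVec_le_normG_mul_normG hM u v, two_mul_le_add_sq (normG M u) (normG M v)]

lemma energy_balance_of_dual_step {M A : Matrix (Fin d) (Fin d) ℝ} (hM : M.PosSemidef)
    (hG : G.PosDef) {Δt : ℝ} (hΔt : 0 ≤ Δt) {u w ρ : Fin d → ℝ}
    (h : (M + Δt • Aᵀ) *ᵥ u = M *ᵥ w - Δt • ρ) :
    u ⬝ᵥ M *ᵥ u + Δt * (u ⬝ᵥ symPart A *ᵥ u) ≤
      (u ⬝ᵥ M *ᵥ u + w ⬝ᵥ M *ᵥ w) / 2 + Δt * (dualNorm G ρ * normG G u) := by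
  have htested : u ⬝ᵥ M *ᵥ u + Δt * (u ⬝ᵥ symPart A *ᵥ u) = u ⬝ᵥ M *ᵥ w + Δt * (ρ ⬝ᵥ -u) := by
    have := congrArg (u ⬝ᵥ ·) h
    simp only [dotProduct_add_smul_mulVec, dotProduct_sub, dotProduct_smul, smul_eq_mul,
      dotProduct_transpose_mulVec_self] at this
    rw [dotProduct_symPart_mulVec_self, this, dotProduct_neg, dotProduct_comm ρ]
    ring
  have hρ := dotProduct_le_dualNorm_mul_normG hG ρ (-u)
  rw [normG_neg] at hρ
  rw [htested]
  exact add_le_add (dotProduct_mulVec_le_half_add_half hM u w) (mul_le_mul_of_nonneg_left hρ hΔt)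

end EnergyNorms

section EnergyRecursion

lemma sub_add_sum_Ico_le_sum_Ico {a x y : ℕ → ℝ} {m n : ℕ} (hmn : m ≤ n)
    (h : ∀ k ∈ Ico m n, a k - a (k + 1) + x k ≤ y k) :
    a m - a n + ∑ k ∈ Ico m n, x k ≤ ∑ k ∈ Ico m n, y k := by
  have htel : ∑ k ∈ Ico m n, (a k - a (k + 1)) = a m - a n := by
    rw [← neg_sub, ← sum_Ico_sub a hmn, ← sum_neg_distrib]
    simp only [neg_sub]
  rw [← htel, ← sum_add_distrib]
  exact sum_le_sum h

variable {Δt αA αG : ℝ}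

lemma mul_sub_add_sq_le_of_energy_balance (hαA : 0 < αA) (hΔt : 0 ≤ Δt) {a a' q e r : ℝ}
    (hbal : a + Δt * q ≤ (a + a') / 2 + Δt * (r * e)) (hq : αA * e ^ 2 ≤ q) :
    αA * a - αA * a' + Δt * αA ^ 2 * e ^ 2 ≤ Δt * r ^ 2 := by
  nlinarith [mul_le_mul_of_nonneg_left hbal hαA.le,
    mul_le_mul_of_nonneg_left hq (by positivity : 0 ≤ 2 * αA * Δt),
    mul_le_mul_of_nonneg_left (two_mul_le_add_sq r (αA * e)) hΔt]

variable {N : ℕ} {a q e r : ℕ → ℝ}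

lemma mul_sum_sq_le_of_energy_balance (hαA : 0 < αA) (hΔt : 0 < Δt) (ha₀ : 0 ≤ a 0)
    (haN : a N = 0)
    (hbal : ∀ k < N, a k + Δt * q k ≤ (a k + a (k + 1)) / 2 + Δt * (r k * e k))
    (hq : ∀ k < N, αA * e k ^ 2 ≤ q k) (hcoer : ∀ k < N, αG * e k ^ 2 ≤ a k + Δt * q k) :
    αA * αG * ∑ k ∈ range N, e k ^ 2 ≤ (N * Δt + Δt) * ∑ k ∈ range N, r k ^ 2 := by
  set R := ∑ k ∈ range N, r k ^ 2
  have hdecay (m : ℕ) (hm : m ≤ N) :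
      αA * a m + ∑ k ∈ Ico m N, Δt * αA ^ 2 * e k ^ 2 ≤ ∑ k ∈ Ico m N, Δt * r k ^ 2 := by
    have := sub_add_sum_Ico_le_sum_Ico (a := fun k => αA * a k) hm fun k hk =>
      mul_sub_add_sq_le_of_energy_balance hαA hΔt.le (hbal k (mem_Ico.1 hk).2)
        (hq k (mem_Ico.1 hk).2)
    simpa [haN] using this
  have hsum_sq : αA ^ 2 * ∑ k ∈ range N, e k ^ 2 ≤ R := by
    have := hdecay 0 N.zero_le
    rw [← range_eq_Ico, ← mul_sum, ← mul_sum, mul_assoc] at this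
    exact le_of_mul_le_mul_left (by nlinarith) hΔt
  have ha_le (m : ℕ) (hm : m ≤ N) : αA * a m ≤ Δt * R := by
    have := hdecay m hm
    rw [← mul_sum, ← mul_sum] at this
    have hIco : ∑ k ∈ Ico m N, r k ^ 2 ≤ R :=
      sum_le_sum_of_subset_of_nonneg (by rw [range_eq_Ico]; exact Ico_subset_Ico m.zero_le le_rfl)
        fun k _ _ => sq_nonneg _
    have he : 0 ≤ Δt * αA ^ 2 * ∑ k ∈ Ico m N, e k ^ 2 := by positivity
    nlinarith [mul_le_mul_of_nonneg_left hIco hΔt.le]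
  have hcross : αA * ∑ k ∈ range N, r k * e k ≤ R := by
    have := sum_le_sum fun k (_ : k ∈ range N) =>
      (by nlinarith [two_mul_le_add_sq (r k) (αA * e k)] :
        2 * αA * (r k * e k) ≤ r k ^ 2 + αA ^ 2 * e k ^ 2)
    rw [sum_add_distrib, ← mul_sum, ← mul_sum] at this
    linarith
  have hstep (k : ℕ) (hk : k < N) : αA * αG * e k ^ 2 ≤ Δt * R + Δt * αA * (r k * e k) := by
    nlinarith [mul_le_mul_of_nonneg_left ((hcoer k hk).trans (hbal k hk)) hαA.le,
      ha_le k hk.le, ha_le (k + 1) hk]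
  calc αA * αG * ∑ k ∈ range N, e k ^ 2
      ≤ ∑ k ∈ range N, (Δt * R + Δt * αA * (r k * e k)) := by
        rw [mul_sum]; exact sum_le_sum fun k hk => hstep k (mem_range.1 hk)
    _ = N * (Δt * R) + Δt * (αA * ∑ k ∈ range N, r k * e k) := by
        rw [sum_add_distrib, sum_const, card_range, nsmul_eq_mul, ← mul_sum, mul_assoc]
    _ ≤ (N * Δt + Δt) * R := by nlinarith

end EnergyRecursion

theorem stmt12_general {d : ℕ}
    (M A S G : Matrix (Fin d) (Fin d) ℝ) (hM : M.PosSemidef)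
    (Δt : ℝ) (hΔt : 0 < Δt)
    (hGdef : G = M + Δt • S) (hG : G.PosDef)
    (N : ℕ)
    (αA αALB : ℝ) (hαALB : 0 < αALB) (hαALBle : αALB ≤ αA)
    (hcoA : ∀ v : Fin d → ℝ, αA * (normG G v)^2 ≤ v ⬝ᵥ (symPart A).mulVec v)
    (αG αGLB : ℝ) (hαGLB : 0 < αGLB) (hαGLBle : αGLB ≤ αG)
    (hcoG : ∀ v : Fin d → ℝ,
      αG * (normG G v)^2 ≤ v ⬝ᵥ (M + Δt • symPart A).mulVec v)
    (ε ϱ : ℕ → Fin d → ℝ) (hεN : ε N = 0)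
    (hstep : ∀ k, k < N →
      (M + Δt • Aᵀ).mulVec (ε k) = M.mulVec (ε (k + 1)) - Δt • ϱ k) :
    (∑ m ∈ Finset.range N,
        (ε m ⬝ᵥ M.mulVec (ε m) + Δt * (ε m ⬝ᵥ S.mulVec (ε m))) =
      ∑ m ∈ Finset.range N, (normG G (ε m))^2) ∧
    ∑ m ∈ Finset.range N, (normG G (ε m))^2 ≤
      ((N * Δt + Δt) / (αGLB * αALB)) * ∑ m ∈ Finset.range N, (dualNorm G (ϱ m))^2 := by
  refine ⟨Finset.sum_congr rfl fun m _ => ?_, ?_⟩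
  · rw [normG_sq hG.posSemidef, hGdef, dotProduct_add_smul_mulVec]
  have henergy := mul_sum_sq_le_of_energy_balance (hαALB.trans_le hαALBle) hΔt
    (by simpa using hM.dotProduct_mulVec_nonneg (ε 0)) (by simp [hεN])
    (fun k hk => energy_balance_of_dual_step hM hG hΔt.le (hstep k hk)) (fun k _ => hcoA (ε k))
    (fun k _ => by simpa only [dotProduct_add_smul_mulVec] using hcoG (ε k))
  have hE : 0 ≤ ∑ m ∈ Finset.range N, normG G (ε m) ^ 2 := by positivity
  rw [div_mul_eq_mul_div, le_div_iff₀ (by positivity)]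
  calc _ ≤ (∑ m ∈ Finset.range N, normG G (ε m) ^ 2) * (αG * αA) :=
        mul_le_mul_of_nonneg_left (mul_le_mul hαGLBle hαALBle hαALB.le
          (hαGLB.le.trans hαGLBle)) hE
    _ ≤ _ := by linarith

theorem stmt12 {d : ℕ} (hd : 1 ≤ d)
    (M A S G : Matrix (Fin d) (Fin d) ℝ) (hM : M.PosSemidef) (hS : S.IsSymm)
    (Δt : ℝ) (hΔt : 0 < Δt)
    (hGdef : G = M + Δt • S) (hG : G.PosDef)
    (N : ℕ) (hN : 1 ≤ N)
    (αA αALB : ℝ) (hαALB : 0 < αALB) (hαALBle : αALB ≤ αA)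
    (hcoA : ∀ v : Fin d → ℝ, αA * (normG G v)^2 ≤ v ⬝ᵥ (symPart A).mulVec v)
    (αG αGLB : ℝ) (hαGLB : 0 < αGLB) (hαGLBle : αGLB ≤ αG)
    (hcoG : ∀ v : Fin d → ℝ,
      αG * (normG G v)^2 ≤ v ⬝ᵥ (M + Δt • symPart A).mulVec v)
    (ε ϱ : ℕ → Fin d → ℝ) (hεN : ε N = 0)
    (hstep : ∀ k, k < N →
      (M + Δt • Aᵀ).mulVec (ε k) = M.mulVec (ε (k + 1)) - Δt • ϱ k) :
    (∑ m ∈ Finset.range N,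
        (ε m ⬝ᵥ M.mulVec (ε m) + Δt * (ε m ⬝ᵥ S.mulVec (ε m))) =
      ∑ m ∈ Finset.range N, (normG G (ε m))^2) ∧
    ∑ m ∈ Finset.range N, (normG G (ε m))^2 ≤
      ((N * Δt + Δt) / (αGLB * αALB)) * ∑ m ∈ Finset.range N, (dualNorm G (ϱ m))^2 :=
  stmt12_general M A S G hM Δt hΔt hGdef hG N αA αALB hαALB hαALBle hcoA αG αGLB hαGLB hαGLBle hcoG
    ε ϱ hεN hstep
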